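/- If the total variation distance between P(X|C=1) and P(X|C=0) is at most ε ≤ 1, and C is uniform binary, then I(C;X) ≤ ε log(2/ε) (for 0 < ε ≤ 1). -/

import Mathlib

/-!
Conditioning on `X = x` splits `I(C; X)` into the Jensen–Shannon terms
`a log (a / m) + b log (b / m)` with `a = P1 x`, `b = P0 x`, `m = (a + b) / 2`. Each is at most
`|a - b| log 2`: for `b ≤ a`, the term in `b` is nonpositive since `b ≤ m`, and convexity of
`t ↦ t log t` on the chord from `1` to `2` bounds the term in `a`. Summing gives
`I(C; X) ≤ D_TV log 2 ≤ ε log 2 ≤ ε log (2 / ε)`.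
-/

open Finset Real

lemma mul_log_div_midpoint_le {a b : ℝ} (hb : 0 ≤ b) (hba : b ≤ a) :
    a * log (a / ((a + b) / 2)) ≤ (a - b) * log 2 := by
  rcases (hb.trans hba).eq_or_lt with rfl | ha
  · obtain rfl : b = 0 := le_antisymm hba hb
    simp
  have hs : 0 < a + b := by linarith
  -- `a / m` is `2` with weight `(a - b) / (a + b)` plus `1` with weight `2b / (a + b)`
  have hconv := convexOn_mul_log.2 (Set.mem_Ici.2 zero_le_two) (Set.mem_Ici.2 zero_le_one)
    (div_nonneg (sub_nonneg.2 hba) hs.le) (by positivity : 0 ≤ 2 * b / (a + b))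
    (by rw [← add_div, div_eq_one_iff_eq hs.ne']; ring)
  have hpt : (a - b) / (a + b) * 2 + 2 * b / (a + b) * 1 = a / ((a + b) / 2) := by
    field_simp; ring
  simp only [smul_eq_mul, hpt, log_one, mul_zero, add_zero] at hconv
  calc a * log (a / ((a + b) / 2))
      = (a + b) / 2 * (a / ((a + b) / 2) * log (a / ((a + b) / 2))) := by field_simp
    _ ≤ (a + b) / 2 * ((a - b) / (a + b) * (2 * log 2)) := by gcongr
    _ = (a - b) * log 2 := by field_simp

lemma mul_log_div_midpoint_add_le {a b : ℝ} (ha : 0 ≤ a) (hb : 0 ≤ b) :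
    a * log (a / ((a + b) / 2)) + b * log (b / ((a + b) / 2)) ≤ |a - b| * log 2 := by
  wlog hba : b ≤ a generalizing a b
  · simpa only [add_comm, abs_sub_comm] using this hb ha (le_of_not_ge hba)
  have hb_mid : b * log (b / ((a + b) / 2)) ≤ 0 :=
    mul_nonpos_of_nonneg_of_nonpos hb
      (log_nonpos (by positivity) (div_le_one_of_le₀ (by linarith) (by positivity)))
  rw [abs_of_nonneg (sub_nonneg.2 hba)]
  linarith [mul_log_div_midpoint_le hb hba]

/-- `I(C; X)` in nats, for `C` uniform on `Bool` and `X` distributed as `P1` given `C = true`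
and as `P0` given `C = false`. -/
noncomputable def mutualInfoUniformBool {X : Type*} [Fintype X] (P1 P0 : X → ℝ) : ℝ :=
  ∑ c : Bool, ∑ x : X,
    ((1 / 2) * (if c then P1 x else P0 x)) *
      log (((1 / 2) * (if c then P1 x else P0 x)) /
        ((∑ x' : X, (1 / 2) * (if c then P1 x' else P0 x')) *
          (∑ c' : Bool, (1 / 2) * (if c' then P1 x else P0 x))))

section

variable {X : Type*} [Fintype X] {P1 P0 : X → ℝ}

lemma mutualInfoUniformBool_eq (h1sum : ∑ x, P1 x = 1) (h0sum : ∑ x, P0 x = 1) :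
    mutualInfoUniformBool P1 P0 = 1 / 2 * ∑ x, (P1 x * log (P1 x / ((P1 x + P0 x) / 2)) +
      P0 x * log (P0 x / ((P1 x + P0 x) / 2))) := by
  have hmarg (x : X) :
      ∑ c : Bool, (1 / 2 : ℝ) * (if c then P1 x else P0 x) = (P1 x + P0 x) / 2 := by
    simp only [Fintype.sum_bool, if_true, Bool.false_eq_true, if_false]; ring
  simp only [mutualInfoUniformBool, Fintype.sum_bool, if_true, Bool.false_eq_true, if_false,
    ← mul_sum, h1sum, h0sum, hmarg]
  rw [← sum_add_distrib, mul_sum]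
  refine sum_congr rfl fun x _ ↦ ?_
  rw [mul_one, mul_div_mul_left _ _ one_half_pos.ne', mul_div_mul_left _ _ one_half_pos.ne']
  ring

lemma mutualInfoUniformBool_le (h1nn : ∀ x, 0 ≤ P1 x) (h0nn : ∀ x, 0 ≤ P0 x)
    (h1sum : ∑ x, P1 x = 1) (h0sum : ∑ x, P0 x = 1) :
    mutualInfoUniformBool P1 P0 ≤ (1 / 2 * ∑ x, |P1 x - P0 x|) * log 2 := by
  rw [mutualInfoUniformBool_eq h1sum h0sum, mul_assoc, sum_mul]
  gcongr with x
  exact mul_log_div_midpoint_add_le (h1nn x) (h0nn x)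

end

/-- If D_TV(P(X|C=1), P(X|C=0)) ≤ ε with 0 < ε ≤ 1 and C is uniform
binary, then I(C;X) ≤ ε log(2/ε). -/
theorem mutual_information_le_of_tv_close
    {X : Type*} [Fintype X] (P1 P0 : X → ℝ) (ε : ℝ)
    (h1nn : ∀ x, 0 ≤ P1 x) (h0nn : ∀ x, 0 ≤ P0 x)
    (h1sum : ∑ x : X, P1 x = 1) (h0sum : ∑ x : X, P0 x = 1)
    (hε0 : 0 < ε) (hε1 : ε ≤ 1)
    (hTV : (1 / 2) * ∑ x : X, |P1 x - P0 x| ≤ ε) :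
    ∑ c : Bool, ∑ x : X,
      ((1 / 2) * (if c then P1 x else P0 x)) *
        Real.log (((1 / 2) * (if c then P1 x else P0 x)) /
          ((∑ x' : X, (1 / 2) * (if c then P1 x' else P0 x')) *
            (∑ c' : Bool, (1 / 2) * (if c' then P1 x else P0 x))))
      ≤ ε * Real.log (2 / ε) :=
  calc mutualInfoUniformBool P1 P0
      ≤ (1 / 2 * ∑ x, |P1 x - P0 x|) * log 2 := mutualInfoUniformBool_le h1nn h0nn h1sum h0sum
    _ ≤ ε * log 2 := by gcongr
    _ ≤ ε * log (2 / ε) := by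
      gcongr
      exact (le_div_iff₀ hε0).2 (by linarith)
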